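/- Suppose the eleven known blocks a, b, c, d, e, f, g, h, i, j, k are invertible and that A·B = I and B·A = I. Then x = a⁻¹ + f·k⁻¹·j − g·d·a⁻¹ + f·k⁻¹·z·d·a⁻¹. -/

import Mathlib

open Matrix

/-- The 3×3 block matrix `[[m11, m12, m13], [m21, m22, m23], [m31, m32, m33]]`
assembled from n×n blocks. -/
def blk3 {F : Type*} [Field F] {n : ℕ}
    (m11 m12 m13 m21 m22 m23 m31 m32 m33 : Matrix (Fin n) (Fin n) F) :
    Matrix (Fin n ⊕ (Fin n ⊕ Fin n)) (Fin n ⊕ (Fin n ⊕ Fin n)) F :=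
  Matrix.fromBlocks m11 (Matrix.fromCols m12 m13) (Matrix.fromRows m21 m31)
    (Matrix.fromBlocks m22 m23 m32 m33)

/-! The first block column of `B * A = 1` reads `x a + f u + g d = 1` and `j a + k u + z d = 0`.
Since `k` is invertible the second equation determines `u`, and substituting it into the first
and multiplying by `a⁻¹` on the right gives `x`. -/

section

variable {m R : Type*} [Fintype m] [DecidableEq m] [CommRing R]

theorem eq_of_mul_add_eq_one_of_mul_add_eq_zero {a d f g j k u x z : Matrix m m R}
    (ha : IsUnit a) (hk : IsUnit k)
    (h₁ : x * a + f * u + g * d = 1) (h₂ : j * a + k * u + z * d = 0) :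
    x = a⁻¹ + f * k⁻¹ * j - g * d * a⁻¹ + f * k⁻¹ * z * d * a⁻¹ := by
  rw [isUnit_iff_isUnit_det] at ha hk
  have hku : k * u = -(j * a + z * d) := eq_neg_of_add_eq_zero_left (by rw [← h₂]; abel)
  have hu : u = -(k⁻¹ * (j * a + z * d)) := by
    rw [← Matrix.mul_neg, ← hku, nonsing_inv_mul_cancel_left _ _ hk]
  have hxa : x * a = 1 + f * k⁻¹ * (j * a + z * d) - g * d := by
    rw [← h₁, hu]; noncomm_ring
  calc x = x * a * a⁻¹ := (mul_nonsing_inv_cancel_right _ _ ha).symm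
    _ = _ := by
      rw [hxa]
      simp only [Matrix.add_mul, Matrix.sub_mul, Matrix.mul_add, Matrix.one_mul, Matrix.mul_assoc,
        mul_nonsing_inv _ ha, Matrix.mul_one]
      abel

end

section

variable {F : Type*} [Field F] {n : ℕ}

theorem blk3_mul (a₁₁ a₁₂ a₁₃ a₂₁ a₂₂ a₂₃ a₃₁ a₃₂ a₃₃ b₁₁ b₁₂ b₁₃ b₂₁ b₂₂ b₂₃ b₃₁ b₃₂ b₃₃ :
      Matrix (Fin n) (Fin n) F) :
    blk3 a₁₁ a₁₂ a₁₃ a₂₁ a₂₂ a₂₃ a₃₁ a₃₂ a₃₃ * blk3 b₁₁ b₁₂ b₁₃ b₂₁ b₂₂ b₂₃ b₃₁ b₃₂ b₃₃ =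
      blk3 (a₁₁ * b₁₁ + a₁₂ * b₂₁ + a₁₃ * b₃₁) (a₁₁ * b₁₂ + a₁₂ * b₂₂ + a₁₃ * b₃₂)
        (a₁₁ * b₁₃ + a₁₂ * b₂₃ + a₁₃ * b₃₃)
        (a₂₁ * b₁₁ + a₂₂ * b₂₁ + a₂₃ * b₃₁) (a₂₁ * b₁₂ + a₂₂ * b₂₂ + a₂₃ * b₃₂)
        (a₂₁ * b₁₃ + a₂₂ * b₂₃ + a₂₃ * b₃₃)
        (a₃₁ * b₁₁ + a₃₂ * b₂₁ + a₃₃ * b₃₁) (a₃₁ * b₁₂ + a₃₂ * b₂₂ + a₃₃ * b₃₂)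
        (a₃₁ * b₁₃ + a₃₂ * b₂₃ + a₃₃ * b₃₃) := by
  ext (_ | _ | _) (_ | _ | _) <;>
    simp [blk3, Matrix.mul_apply, Fintype.sum_sum_type, add_assoc]

theorem blk3_one : blk3 (1 : Matrix (Fin n) (Fin n) F) 0 0 0 1 0 0 0 1 = 1 := by
  ext (_ | _ | _) (_ | _ | _) <;> simp [blk3, Matrix.one_apply]

theorem blk3_injective {a₁₁ a₁₂ a₁₃ a₂₁ a₂₂ a₂₃ a₃₁ a₃₂ a₃₃ b₁₁ b₁₂ b₁₃ b₂₁ b₂₂ b₂₃ b₃₁ b₃₂ b₃₃ :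
      Matrix (Fin n) (Fin n) F}
    (h : blk3 a₁₁ a₁₂ a₁₃ a₂₁ a₂₂ a₂₃ a₃₁ a₃₂ a₃₃ = blk3 b₁₁ b₁₂ b₁₃ b₂₁ b₂₂ b₂₃ b₃₁ b₃₂ b₃₃) :
    a₁₁ = b₁₁ ∧ a₁₂ = b₁₂ ∧ a₁₃ = b₁₃ ∧ a₂₁ = b₂₁ ∧ a₂₂ = b₂₂ ∧ a₂₃ = b₂₃ ∧
      a₃₁ = b₃₁ ∧ a₃₂ = b₃₂ ∧ a₃₃ = b₃₃ := by
  simp only [blk3, fromBlocks_inj, fromRows_inj.eq_iff, fromCols_inj.eq_iff] at h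
  tauto

end

theorem stmt_10_general {F : Type*} [Field F] {n : ℕ}
    (a b c d e f g h i j k : Matrix (Fin n) (Fin n) F)
    (ha : IsUnit a) (hk : IsUnit k)
    (t u v w x y z : Matrix (Fin n) (Fin n) F)
    (hBA : blk3 x f g h y i j k z * blk3 a t b u c v d w e = 1) :
    x = a⁻¹ + f * k⁻¹ * j - g * d * a⁻¹ + f * k⁻¹ * z * d * a⁻¹ := by
  rw [blk3_mul, ← blk3_one] at hBA
  obtain ⟨h₁, -, -, -, -, -, h₃, -, -⟩ := blk3_injective hBA
  exact eq_of_mul_add_eq_one_of_mul_add_eq_zero ha hk h₁ h₃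

theorem stmt_10 {F : Type*} [Field F] {n : ℕ} (hn : 0 < n)
    (a b c d e f g h i j k : Matrix (Fin n) (Fin n) F)
    (ha : IsUnit a) (hb : IsUnit b) (hc : IsUnit c) (hd : IsUnit d) (he : IsUnit e)
    (hf : IsUnit f) (hg : IsUnit g) (hh : IsUnit h) (hi : IsUnit i) (hj : IsUnit j)
    (hk : IsUnit k)
    (t u v w x y z : Matrix (Fin n) (Fin n) F)
    (hAB : blk3 a t b u c v d w e * blk3 x f g h y i j k z = 1)
    (hBA : blk3 x f g h y i j k z * blk3 a t b u c v d w e = 1) :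
    x = a⁻¹ + f * k⁻¹ * j - g * d * a⁻¹ + f * k⁻¹ * z * d * a⁻¹ :=
  stmt_10_general a b c d e f g h i j k ha hk t u v w x y z hBA
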